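/- Let G = H + 3, where H is a nonempty simple loony endgame consisting only of loops. If v(H) = 2, then opening the 3-chain is optimal and v(G) = 1; that is, v(G) = 1 + |v(H) - 2| = 1. -/
import Mathlib


/-- A component of a dots-and-boxes endgame: a chain or a loop, with an integer length. -/
inductive Comp : Type
  | chain (c : ℤ) : Comp
  | loop (l : ℤ) : Comp
  deriving DecidableEq

/-- The length (number of boxes) of a component. -/
def Comp.len : Comp → ℤ
  | .chain c => c
  | .loop l => l

/-- A simple loony endgame: a multiset of chains of length ≥ 3 and loops of even length ≥ 4. -/
def IsSimpleLoony (G : Multiset Comp) : Prop :=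
  ∀ p ∈ G, match p with
    | .chain c => 3 ≤ c
    | .loop l => 4 ≤ l ∧ Even l

/-- Fuel-indexed value function. -/
noncomputable def vAux : ℕ → Multiset Comp → ℤ
  | 0, _ => 0
  | n + 1, G =>
    if G = 0 then 0
    else sInf { x : ℤ | ∃ p ∈ G,
      x = match p with
        | Comp.chain c => c - 2 + |vAux n (G.erase p) - 2|
        | Comp.loop l => l - 4 + |vAux n (G.erase p) - 4| }

/-- The value of a simple loony endgame: 0 on the empty game; on a nonempty game, the
minimum over components of `c - 2 + |v(G∖{c}) - 2|` for a chain of length `c` and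
`ℓ - 4 + |v(G∖{ℓ}) - 4|` for a loop of length `ℓ`. -/
noncomputable def v (G : Multiset Comp) : ℤ := vAux (Multiset.card G) G

/-- The fully controlled value: Σ_chains (c - 4) + Σ_loops (ℓ - 8). -/
def fcv (G : Multiset Comp) : ℤ :=
  (G.map (fun p => match p with
    | Comp.chain c => c - 4
    | Comp.loop l => l - 8)).sum

/-- The terminal bonus. -/
noncomputable def tb (G : Multiset Comp) : ℤ :=
  open Classical in
  if G = 0 then 0
  else if (∃ c, 4 ≤ c ∧ Comp.chain c ∈ G) ∨ (∀ l, Comp.loop l ∉ G) then 4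
  else if ∀ c, Comp.chain c ∉ G then 8
  else 6

/-- The controlled value. -/
noncomputable def cv (G : Multiset Comp) : ℤ := fcv G + tb G

/-- The value of a move opening component `p` in game `G`. -/
noncomputable def moveVal (G : Multiset Comp) (p : Comp) : ℤ :=
  match p with
  | Comp.chain c => c - 2 + |v (G.erase p) - 2|
  | Comp.loop l => l - 4 + |v (G.erase p) - 4|

lemma v_rec (G : Multiset Comp) (hG : G ≠ 0) :
    v G = sInf { x : ℤ | ∃ p ∈ G, x = moveVal G p } := by
  obtain ⟨n, hn⟩ : ∃ n, Multiset.card G = n + 1 := by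
    have := Multiset.card_pos.mpr hG
    exact ⟨Multiset.card G - 1, by omega⟩
  show vAux (Multiset.card G) G = _
  rw [hn]
  simp only [vAux, if_neg hG]
  congr 1
  ext x
  constructor
  · rintro ⟨p, hp, hx⟩
    refine ⟨p, hp, ?_⟩
    have hc : Multiset.card (G.erase p) = n := by
      rw [Multiset.card_erase_of_mem hp, hn]; rfl
    cases p with
    | chain c => simpa [moveVal, v, hc] using hx
    | loop l => simpa [moveVal, v, hc] using hx
  · rintro ⟨p, hp, hx⟩
    refine ⟨p, hp, ?_⟩
    have hc : Multiset.card (G.erase p) = n := by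
      rw [Multiset.card_erase_of_mem hp, hn]; rfl
    cases p with
    | chain c => simpa [moveVal, v, hc] using hx
    | loop l => simpa [moveVal, v, hc] using hx

lemma moveSet_finite (G : Multiset Comp) :
    { x : ℤ | ∃ p ∈ G, x = moveVal G p }.Finite := by
  have : { x : ℤ | ∃ p ∈ G, x = moveVal G p } = moveVal G '' (G.toFinset : Set Comp) := by
    ext x
    simp only [Set.mem_setOf_eq, Set.mem_image, Finset.coe_sort_coe, Multiset.mem_toFinset,
      Finset.mem_coe]
    constructor
    · rintro ⟨p, hp, hx⟩; exact ⟨p, hp, hx.symm⟩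
    · rintro ⟨p, hp, hx⟩; exact ⟨p, hp, hx.symm⟩
  rw [this]
  exact (G.toFinset.finite_toSet).image _

lemma moveSet_nonempty (G : Multiset Comp) (hG : G ≠ 0) :
    { x : ℤ | ∃ p ∈ G, x = moveVal G p }.Nonempty := by
  obtain ⟨p, hp⟩ := Multiset.exists_mem_of_ne_zero hG
  exact ⟨moveVal G p, p, hp, rfl⟩

/-- Total number of boxes. -/
def total (G : Multiset Comp) : ℤ := (G.map Comp.len).sum

lemma total_cons (p : Comp) (G : Multiset Comp) :
    total (p ::ₘ G) = p.len + total G := by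
  simp [total]

lemma total_erase (G : Multiset Comp) (p : Comp) (hp : p ∈ G) :
    total G = p.len + total (G.erase p) := by
  conv_lhs => rw [← Multiset.cons_erase hp]
  exact total_cons _ _

lemma v_parity (G : Multiset Comp) : v G % 2 = total G % 2 := by
  induction G using Multiset.strongInductionOn with
  | ih G ih =>
    by_cases hG : G = 0
    · subst hG; simp [v, total, vAux]
    · rw [v_rec G hG]
      have hmem := Set.Nonempty.csInf_mem (moveSet_nonempty G hG) (moveSet_finite G)
      obtain ⟨p, hp, hx⟩ := hmem
      rw [hx]
      have hlt : G.erase p < G := Multiset.erase_lt.mpr hp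
      have ihp := ih (G.erase p) hlt
      have htot := total_erase G p hp
      cases p with
      | chain c =>
        simp only [moveVal, Comp.len] at *
        rcases abs_choice (v (G.erase (Comp.chain c)) - 2) with h | h <;> rw [h] <;> omega
      | loop l =>
        simp only [moveVal, Comp.len] at *
        rcases abs_choice (v (G.erase (Comp.loop l)) - 4) with h | h <;> rw [h] <;> omega

lemma total_even (H : Multiset Comp) (hH : IsSimpleLoony H)
    (hloops : ∀ c : ℤ, Comp.chain c ∉ H) : total H % 2 = 0 := by
  induction H using Multiset.induction with
  | empty => simp [total]
  | cons a s ihs =>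
    have ha := hH a (Multiset.mem_cons_self a s)
    cases a with
    | chain c => exact absurd (Multiset.mem_cons_self _ s) (hloops c)
    | loop l =>
      obtain ⟨hl4, k, hk⟩ := ha
      have hs : total s % 2 = 0 := by
        refine ihs (fun p hp => hH p (Multiset.mem_cons_of_mem hp)) ?_
        intro c hc
        exact hloops c (Multiset.mem_cons_of_mem hc)
      rw [total_cons]
      simp only [Comp.len]
      omega

theorem stmt19 (H : Multiset Comp) (hH : IsSimpleLoony H) (hne : H ≠ 0)
    (hloops : ∀ c : ℤ, Comp.chain c ∉ H) (hv : v H = 2) :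
    v (Comp.chain 3 ::ₘ H) = 1 ∧ v (Comp.chain 3 ::ₘ H) = 1 + |v H - 2| := by
  set G : Multiset Comp := Comp.chain 3 ::ₘ H with hGdef
  have hGne : G ≠ 0 := Multiset.cons_ne_zero
  have hHeven := total_even H hH hloops
  have hone : (1 : ℤ) ∈ { x : ℤ | ∃ p ∈ G, x = moveVal G p } := by
    refine ⟨Comp.chain 3, Multiset.mem_cons_self _ _, ?_⟩
    simp [moveVal, hGdef, Multiset.erase_cons_head, hv]
  have hlb : ∀ x ∈ { x : ℤ | ∃ p ∈ G, x = moveVal G p }, 1 ≤ x := by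
    rintro x ⟨p, hp, hx⟩
    rcases Multiset.mem_cons.mp hp with hp3 | hpH
    · subst hp3
      rw [hx]
      simp [moveVal, hGdef, Multiset.erase_cons_head, hv]
    · cases p with
      | chain c => exact absurd hpH (hloops c)
      | loop l =>
        obtain ⟨hl4, k, hk⟩ := hH _ hpH
        have herase : G.erase (Comp.loop l) = Comp.chain 3 ::ₘ H.erase (Comp.loop l) := by
          rw [hGdef]
          exact Multiset.erase_cons_tail _ (by simp)
        have hpar := v_parity (Comp.chain 3 ::ₘ H.erase (Comp.loop l))
        rw [total_cons] at hpar
        have hte := total_erase H (Comp.loop l) hpH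
        simp only [Comp.len] at hpar hte
        rw [hx]
        simp only [moveVal]
        rw [herase]
        rcases abs_cases (v (Comp.chain 3 ::ₘ H.erase (Comp.loop l)) - 4) with ⟨h, hs⟩ | ⟨h, hs⟩ <;>
          rw [h] <;> omega
  constructor
  · rw [v_rec G hGne]
    refine le_antisymm (csInf_le ⟨1, hlb⟩ hone) (le_csInf (moveSet_nonempty G hGne) hlb)
  · rw [hv]
    rw [v_rec G hGne]
    simpa using le_antisymm (csInf_le ⟨1, hlb⟩ hone) (le_csInf (moveSet_nonempty G hGne) hlb)
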